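/- For local biretractions α of a commutative Hopf algebroid H over A, with α* = (α∘t)^{-1} ∘ α ∘ S, one has (α ∗ α*)(h) = ε(h)·e^α and (α* ∗ α)(h) = ε(h)·α(1_H) for all h ∈ H. -/

import Mathlib

open TensorProduct

/-- The unital ideal `A·e` generated by an element `e` of a commutative ring. -/
def idealOf {A : Type*} [CommRing A] (e : A) : Set A := Set.range (fun a => a * e)

/-- A commutative Hopf algebroid over a commutative base algebra `A`:
a commutative algebra `H` with source and target maps `s, t : A → H`,
comultiplication `Δ`, counit `ε` and antipode `S` satisfying the standard axioms
(`S∘t = s`, `S∘s = t`, `S(h₍₁₎)h₍₂₎ = s(ε h)`, `h₍₁₎S(h₍₂₎) = t(ε h)`, etc.). -/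
structure CommHopfAlgebroid (k A H : Type*) [CommRing k] [CommRing A] [CommRing H]
    [Algebra k A] [Algebra k H] where
  s : A →ₐ[k] H
  t : A →ₐ[k] H
  comul : H →ₐ[k] H ⊗[k] H
  counit : H →ₐ[k] A
  antipode : H →ₐ[k] H
  coassoc :
    (TensorProduct.assoc k H H H).toLinearMap ∘ₗ
      (TensorProduct.map comul.toLinearMap LinearMap.id) ∘ₗ comul.toLinearMap
    = (TensorProduct.map LinearMap.id comul.toLinearMap) ∘ₗ comul.toLinearMap
  counit_left : (LinearMap.mul' k H) ∘ₗ
      (TensorProduct.map (t.toLinearMap ∘ₗ counit.toLinearMap) LinearMap.id) ∘ₗ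
        comul.toLinearMap = LinearMap.id
  counit_right : (LinearMap.mul' k H) ∘ₗ
      (TensorProduct.map LinearMap.id (s.toLinearMap ∘ₗ counit.toLinearMap)) ∘ₗ
        comul.toLinearMap = LinearMap.id
  counit_s : ∀ a : A, counit (s a) = a
  counit_t : ∀ a : A, counit (t a) = a
  antipode_s : ∀ a : A, antipode (s a) = t a
  antipode_t : ∀ a : A, antipode (t a) = s a
  comul_t : ∀ a : A, comul (t a) = t a ⊗ₜ[k] 1
  comul_s : ∀ a : A, comul (s a) = 1 ⊗ₜ[k] s a
  antipode_left : (LinearMap.mul' k H) ∘ₗ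
      (TensorProduct.map antipode.toLinearMap LinearMap.id) ∘ₗ comul.toLinearMap
    = s.toLinearMap ∘ₗ counit.toLinearMap
  antipode_right : (LinearMap.mul' k H) ∘ₗ
      (TensorProduct.map LinearMap.id antipode.toLinearMap) ∘ₗ comul.toLinearMap
    = t.toLinearMap ∘ₗ counit.toLinearMap

variable {k A H : Type*} [CommRing k] [CommRing A] [CommRing H] [Algebra k A] [Algebra k H]

/-- The convolution product of right `A`-linear maps `H → A`:
`(α ∗ β)(h) = β(t(α(h₍₁₎)) · h₍₂₎) = β(t(α(h₍₁₎))) · β(h₍₂₎)`. -/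
noncomputable def brtConv (D : CommHopfAlgebroid k A H) (α β : H →ₗ[k] A) : H →ₗ[k] A :=
  β ∘ₗ (LinearMap.mul' k H) ∘ₗ
    (TensorProduct.map (D.t.toLinearMap ∘ₗ α) LinearMap.id) ∘ₗ D.comul.toLinearMap

/-- `e` is a witness for axiom (BRT2) of a local biretraction `α`:
`α(t(e)) = α(1)` and `α∘t` restricts to a bijection `A·e → A·α(1)`. -/
def IsBrtWitness (D : CommHopfAlgebroid k A H) (α : H →ₗ[k] A) (e : A) : Prop :=
  α (D.t e) = α 1 ∧ Set.BijOn (fun a => α (D.t a)) (idealOf e) (idealOf (α 1))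

/-- A local biretraction of a commutative Hopf algebroid: a linear multiplicative
map `α : H → A` satisfying (BRT1) `α(s(a)) = a·α(1)` and (BRT2). -/
def IsBiretraction (D : CommHopfAlgebroid k A H) (α : H →ₗ[k] A) : Prop :=
  (∀ x y : H, α (x * y) = α x * α y) ∧ (∀ a : A, α (D.s a) = a * α 1) ∧
    ∃ e : A, IsBrtWitness D α e

/-- **Formulas for `α ∗ α*` and `α* ∗ α`.** For a local biretraction `α` with
(BRT2)-witness `e^α` and pseudo-inverse `α* = (α∘t)⁻¹ ∘ α ∘ S`:
`(α ∗ α*)(h) = ε(h)·e^α` and `(α* ∗ α)(h) = ε(h)·α(1)`. -/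
theorem brtConv_pseudoInverse_formulas (D : CommHopfAlgebroid k A H)
    (α : H →ₗ[k] A) (hα : IsBiretraction D α)
    (e : A) (he : IsBrtWitness D α e)
    (inv : A →ₗ[k] A)
    (hinv1 : ∀ x ∈ idealOf e, inv (α (D.t x)) = x)
    (hinv2 : ∀ y ∈ idealOf (α 1), α (D.t (inv y)) = y) :
    (∀ h : H, brtConv D α (inv ∘ₗ α ∘ₗ D.antipode.toLinearMap) h = D.counit h * e) ∧
    (∀ h : H, brtConv D (inv ∘ₗ α ∘ₗ D.antipode.toLinearMap) α h = D.counit h * α 1) := by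
  obtain ⟨hmul, hbrt1, -⟩ := hα
  obtain ⟨he1, -⟩ := he
  have hα1 : ∀ x : H, α x * α 1 = α x := fun x => by rw [← hmul, mul_one]
  constructor
  · intro h
    have key : ∀ z : H ⊗[k] H,
        (inv ∘ₗ α ∘ₗ D.antipode.toLinearMap) ((LinearMap.mul' k H)
          ((TensorProduct.map (D.t.toLinearMap ∘ₗ α) LinearMap.id) z))
        = inv (α ((LinearMap.mul' k H)
          ((TensorProduct.map LinearMap.id D.antipode.toLinearMap) z))) := by
      intro z
      induction z using TensorProduct.induction_on with
      | zero => simp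
      | tmul x y =>
          simp only [TensorProduct.map_tmul, LinearMap.mul'_apply, LinearMap.comp_apply,
            LinearMap.id_coe, id_eq, AlgHom.toLinearMap_apply]
          congr 1
          rw [map_mul, D.antipode_t, hmul, hbrt1, hmul, mul_right_comm, ← hmul, hα1]
      | add a b ha hb => simp only [map_add, ha, hb]
    have h2 := LinearMap.congr_fun D.antipode_right h
    simp only [LinearMap.comp_apply, AlgHom.toLinearMap_apply] at h2
    simp only [brtConv, LinearMap.comp_apply, AlgHom.toLinearMap_apply]
    have := key (D.comul h)
    simp only [LinearMap.comp_apply, AlgHom.toLinearMap_apply] at this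
    rw [this, h2]
    have heq : α (D.t (D.counit h)) = α (D.t (D.counit h * e)) := by
      rw [map_mul, hmul, he1, hα1]
    rw [heq, hinv1 _ ⟨D.counit h, rfl⟩]
  · intro h
    have key : ∀ z : H ⊗[k] H,
        α ((LinearMap.mul' k H)
          ((TensorProduct.map (D.t.toLinearMap ∘ₗ (inv ∘ₗ α ∘ₗ D.antipode.toLinearMap))
            LinearMap.id) z))
        = α ((LinearMap.mul' k H)
          ((TensorProduct.map D.antipode.toLinearMap LinearMap.id) z)) := by
      intro z
      induction z using TensorProduct.induction_on with
      | zero => simp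
      | tmul x y =>
          simp only [TensorProduct.map_tmul, LinearMap.mul'_apply, LinearMap.comp_apply,
            LinearMap.id_coe, id_eq, AlgHom.toLinearMap_apply]
          rw [hmul, hmul, hinv2 _ ⟨α (D.antipode x), hα1 _⟩]
      | add a b ha hb => simp only [map_add, ha, hb]
    have h2 := LinearMap.congr_fun D.antipode_left h
    simp only [LinearMap.comp_apply, AlgHom.toLinearMap_apply] at h2
    simp only [brtConv, LinearMap.comp_apply, AlgHom.toLinearMap_apply]
    have := key (D.comul h)
    rw [this, h2, hbrt1]
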